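/- arXiv:2011.03648 — 3 statements merged into one kernel-verified Lean document; each statement's English description precedes it below -/
import Mathlib

section
/- Let λ > 0 and let q : ℝ → Quaternion ℝ be differentiable with ‖q(t)‖ = 1 for all t ≥ 0 and satisfy q'(t) = (1/2) · q(t) * ⟦−λ · sgn₊(q°(t)) · q⃗(t)⟧ for all t ≥ 0. Then, for every such solution (with arbitrary unit initial condition, including ‖q⃗(0)‖ = 1), there exist constants C ≥ 0 and μ > 0 such that ‖q⃗(t)‖ ≤ C · exp(−μ t) for all t ≥ 0; in particular q(t) converges to 1 or to −1, both of which represent the identity rotation. (Global exponential convergence of the error quaternion to the identity quaternion.) -/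
/-!
The scalar part `η = q°` obeys `η' = (λ/2) sgn₊(η) (1 - η²)` as long as `‖q‖ = 1`, so `1 - η²`
satisfies `(1 - η²)' = -λ |η| (1 - η²)`. Hence `η²` never decreases, and `η` cannot stay at `0`
on any interval because `sgn₊ 0 = 1` pushes it away from zero; thus `b = |η(1)| > 0` and
`|η| ≥ b` from time `1` on. Grönwall then gives `‖q⃗‖² = 1 - η² ≤ e^{λb(1 - t)}`, and `η`, which
keeps its sign after time `0`, tends to `±1`.
-/

noncomputable section

open Filter Topology

/-- `sgn₊ x = 1` if `x ≥ 0` and `-1` if `x < 0`. -/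
def sgnPlus (x : ℝ) : ℝ := if 0 ≤ x then 1 else -1

/-- The vector (imaginary) part of a quaternion, as a vector in Euclidean `ℝ³`. -/
def vecPart (p : Quaternion ℝ) : EuclideanSpace ℝ (Fin 3) := WithLp.toLp 2 ![p.imI, p.imJ, p.imK]

/-- The pure-imaginary quaternion `⟦v⟧` with vector part `v`. -/
def quatOfVec (v : EuclideanSpace ℝ (Fin 3)) : Quaternion ℝ := ⟨0, v 0, v 1, v 2⟩

open Set Real

lemma sgnPlus_mul_self (x : ℝ) : sgnPlus x * x = |x| := by
  unfold sgnPlus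
  split_ifs with hx
  · rw [one_mul, abs_of_nonneg hx]
  · rw [neg_one_mul, abs_of_neg (not_le.mp hx)]

namespace SlidingScalar

variable {lam : ℝ} {η : ℝ → ℝ}

lemma hasDerivAt_one_sub_sq
    (hη : ∀ t ≥ 0, HasDerivAt η (lam / 2 * sgnPlus (η t) * (1 - η t ^ 2)) t) {t : ℝ}
    (ht : 0 ≤ t) :
    HasDerivAt (fun s => 1 - η s ^ 2) (-(lam * |η t|) * (1 - η t ^ 2)) t := by
  refine (((hη t ht).pow 2).const_sub 1).congr_deriv ?_
  rw [← sgnPlus_mul_self]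
  ring

lemma antitoneOn_one_sub_sq (hlam : 0 ≤ lam)
    (hη : ∀ t ≥ 0, HasDerivAt η (lam / 2 * sgnPlus (η t) * (1 - η t ^ 2)) t)
    (hle : ∀ t ≥ 0, η t ^ 2 ≤ 1) :
    AntitoneOn (fun t => 1 - η t ^ 2) (Ici 0) := by
  refine antitoneOn_of_hasDerivWithinAt_nonpos (convex_Ici 0)
    (fun t ht => (hasDerivAt_one_sub_sq hη ht).continuousAt.continuousWithinAt)
    (fun t ht => (hasDerivAt_one_sub_sq hη (interior_subset ht).out).hasDerivWithinAt)
    fun t ht => ?_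
  have ht : 0 ≤ t := (interior_subset ht).out
  have hrate : 0 ≤ lam * |η t| := by positivity
  nlinarith [hle t ht]

lemma abs_le_abs_of_le (hlam : 0 ≤ lam)
    (hη : ∀ t ≥ 0, HasDerivAt η (lam / 2 * sgnPlus (η t) * (1 - η t ^ 2)) t)
    (hle : ∀ t ≥ 0, η t ^ 2 ≤ 1) {s t : ℝ} (hs : 0 ≤ s) (hst : s ≤ t) :
    |η s| ≤ |η t| := by
  have h := antitoneOn_one_sub_sq hlam hη hle hs (hs.trans hst : (0 : ℝ) ≤ t) hst
  simp only at h
  exact sq_le_sq.mp (by linarith)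

lemma ne_zero_of_pos (hlam : 0 < lam)
    (hη : ∀ t ≥ 0, HasDerivAt η (lam / 2 * sgnPlus (η t) * (1 - η t ^ 2)) t)
    (hle : ∀ t ≥ 0, η t ^ 2 ≤ 1) {t : ℝ} (ht : 0 < t) : η t ≠ 0 := by
  intro hzero
  have hvanish : η =ᶠ[𝓝 (t / 2)] fun _ => 0 := by
    filter_upwards [Ioo_mem_nhds (half_pos ht) (half_lt_self ht)] with s hs
    simpa [hzero] using abs_le_abs_of_le hlam.le hη hle hs.1.le hs.2.le
  have hderiv := (hη (t / 2) (half_pos ht).le).unique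
    ((hasDerivAt_const _ (0 : ℝ)).congr_of_eventuallyEq hvanish)
  rw [hvanish.eq_of_nhds, sgnPlus, if_pos le_rfl] at hderiv
  linarith

lemma one_sub_sq_le_exp (hlam : 0 ≤ lam)
    (hη : ∀ t ≥ 0, HasDerivAt η (lam / 2 * sgnPlus (η t) * (1 - η t ^ 2)) t)
    (hle : ∀ t ≥ 0, η t ^ 2 ≤ 1) (t : ℝ) :
    1 - η t ^ 2 ≤ exp (lam * |η 1| * (1 - t)) := by
  rcases le_total t 1 with ht1 | ht1
  · refine (sub_le_self _ (sq_nonneg _)).trans (one_le_exp ?_)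
    exact mul_nonneg (mul_nonneg hlam (abs_nonneg _)) (sub_nonneg.2 ht1)
  have hgronwall := le_gronwallBound_of_liminf_deriv_right_le (a := 1) (b := t) (δ := 1)
    (K := -(lam * |η 1|)) (ε := 0) (f := fun s => 1 - η s ^ 2)
    (fun s hs => (hasDerivAt_one_sub_sq hη (by linarith [hs.1])).continuousAt.continuousWithinAt)
    (fun s hs r hr =>
      (hasDerivAt_one_sub_sq hη (by linarith [hs.1])).hasDerivWithinAt.liminf_right_slope_le hr)
    (sub_le_self _ (sq_nonneg _)) (fun s hs => ?_) t ⟨ht1, le_rfl⟩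
  · rw [gronwallBound_ε0, one_mul] at hgronwall
    convert hgronwall using 2
    ring
  · have hs0 : 0 ≤ s := by linarith [hs.1]
    have hrate : lam * |η 1| ≤ lam * |η s| :=
      mul_le_mul_of_nonneg_left (abs_le_abs_of_le hlam hη hle zero_le_one hs.1) hlam
    nlinarith [sub_nonneg.mpr (hle s hs0)]

lemma tendsto_one_sub_sq_atTop (hlam : 0 < lam)
    (hη : ∀ t ≥ 0, HasDerivAt η (lam / 2 * sgnPlus (η t) * (1 - η t ^ 2)) t)
    (hle : ∀ t ≥ 0, η t ^ 2 ≤ 1) :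
    Tendsto (fun t => 1 - η t ^ 2) atTop (𝓝 0) := by
  have hk : 0 < lam * |η 1| := mul_pos hlam (abs_pos.2 (ne_zero_of_pos hlam hη hle one_pos))
  have hexp : Tendsto (fun t => exp (lam * |η 1| * (1 - t))) atTop (𝓝 0) :=
    tendsto_exp_comp_nhds_zero.2 <| (tendsto_const_mul_atBot_of_pos hk).2 <|
      tendsto_atBot_add_const_left _ 1 tendsto_neg_atTop_atBot
  exact squeeze_zero' ((eventually_ge_atTop 0).mono fun t ht => sub_nonneg.2 (hle t ht))
    (.of_forall (one_sub_sq_le_exp hlam.le hη hle)) hexp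

lemma tendsto_one_or_neg_one (hlam : 0 < lam)
    (hη : ∀ t ≥ 0, HasDerivAt η (lam / 2 * sgnPlus (η t) * (1 - η t ^ 2)) t)
    (hle : ∀ t ≥ 0, η t ^ 2 ≤ 1) :
    Tendsto η atTop (𝓝 1) ∨ Tendsto η atTop (𝓝 (-1)) := by
  have habs : Tendsto (fun t => |η t|) atTop (𝓝 1) := by
    simpa [sqrt_sq_eq_abs] using ((tendsto_one_sub_sq_atTop hlam hη hle).const_sub 1).sqrt
  have hcont : ContinuousOn η (Ioi 0) := fun t ht =>
    (hη t (le_of_lt ht)).continuousAt.continuousWithinAt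
  rcases isPreconnected_Ioi.eq_or_eq_neg_of_sq_eq hcont hcont.abs (fun t _ => by simp [sq_abs])
    (fun ht => abs_ne_zero.2 (ne_zero_of_pos hlam hη hle ht)) with hpos | hneg
  · exact .inl <| habs.congr' <| (eventually_gt_atTop 0).mono fun t ht => (hpos ht).symm
  · exact .inr <| habs.neg.congr' <| (eventually_gt_atTop 0).mono fun t ht => (hneg ht).symm

end SlidingScalar

lemma quatOfVec_smul_vecPart (c : ℝ) (p : Quaternion ℝ) :
    quatOfVec (c • vecPart p) = c • p.im := by
  ext <;> simp [quatOfVec, vecPart]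

lemma norm_vecPart (p : Quaternion ℝ) : ‖vecPart p‖ = ‖p.im‖ := by
  rw [EuclideanSpace.norm_eq, ← sqrt_mul_self (norm_nonneg p.im),
    ← Quaternion.normSq_eq_norm_mul_self, Quaternion.normSq_def']
  simp [vecPart, Fin.sum_univ_three]

lemma norm_vecPart_sq (p : Quaternion ℝ) : ‖vecPart p‖ ^ 2 = ‖p‖ ^ 2 - p.re ^ 2 := by
  rw [norm_vecPart, sq, sq, ← Quaternion.normSq_eq_norm_mul_self,
    ← Quaternion.normSq_eq_norm_mul_self, Quaternion.normSq_def', Quaternion.normSq_def']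
  simp only [Quaternion.re_im, Quaternion.imI_im, Quaternion.imJ_im, Quaternion.imK_im]
  ring

lemma re_mul_quatOfVec_smul_vecPart (c : ℝ) (p : Quaternion ℝ) :
    (p * quatOfVec (c • vecPart p)).re = -c * ‖vecPart p‖ ^ 2 := by
  rw [quatOfVec_smul_vecPart, norm_vecPart, sq, ← Quaternion.normSq_eq_norm_mul_self,
    Quaternion.normSq_def', Quaternion.re_mul]
  simp only [Quaternion.re_smul, Quaternion.imI_smul, Quaternion.imJ_smul, Quaternion.imK_smul,
    Quaternion.re_im, Quaternion.imI_im, Quaternion.imJ_im, Quaternion.imK_im, smul_eq_mul]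
  ring

lemma tendsto_coe_of_tendsto_re_of_tendsto_im {α : Type*} {l : Filter α} {f : α → Quaternion ℝ}
    {r : ℝ} (hre : Tendsto (fun x => (f x).re) l (𝓝 r))
    (him : Tendsto (fun x => (f x).im) l (𝓝 0)) : Tendsto f l (𝓝 r) := by
  simpa using (Quaternion.continuous_coe.tendsto r |>.comp hre).add him

lemma HasDerivAt.quaternion_re {f : ℝ → Quaternion ℝ} {f' : Quaternion ℝ} {t : ℝ}
    (hf : HasDerivAt f f' t) : HasDerivAt (fun s => (f s).re) f'.re t :=
  (⟨QuaternionAlgebra.reₗ _ _ _, Quaternion.continuous_re⟩ : Quaternion ℝ →L[ℝ] ℝ).hasFDerivAt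
    |>.comp_hasDerivAt t hf

theorem sliding_surface_global_exponential_convergence
    (lam : ℝ) (hlam : 0 < lam) (q : ℝ → Quaternion ℝ)
    (hq : Differentiable ℝ q)
    (hunit : ∀ t ≥ (0 : ℝ), ‖q t‖ = 1)
    (hdyn : ∀ t ≥ (0 : ℝ), deriv q t =
      (1 / 2 : ℝ) • (q t * quatOfVec ((-(lam * sgnPlus (q t).re)) • vecPart (q t)))) :
    (∃ C ≥ (0 : ℝ), ∃ μ > (0 : ℝ), ∀ t ≥ (0 : ℝ),
      ‖vecPart (q t)‖ ≤ C * Real.exp (-μ * t)) ∧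
    (Tendsto q atTop (𝓝 1) ∨ Tendsto q atTop (𝓝 (-1))) := by
  set η := fun t => (q t).re
  have hvec : ∀ t ≥ (0 : ℝ), ‖vecPart (q t)‖ ^ 2 = 1 - η t ^ 2 := fun t ht => by
    rw [norm_vecPart_sq, hunit t ht, one_pow]
  have hle : ∀ t ≥ (0 : ℝ), η t ^ 2 ≤ 1 := fun t ht => by
    linarith [hvec t ht, sq_nonneg ‖vecPart (q t)‖]
  have hη : ∀ t ≥ (0 : ℝ), HasDerivAt η (lam / 2 * sgnPlus (η t) * (1 - η t ^ 2)) t :=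
    fun t ht => by
      have h := (hq t).hasDerivAt.quaternion_re
      rw [hdyn t ht, Quaternion.re_smul, re_mul_quatOfVec_smul_vecPart, hvec t ht] at h
      refine h.congr_deriv ?_
      rw [smul_eq_mul]
      ring
  set k := lam * |η 1|
  have hk : 0 < k := mul_pos hlam (abs_pos.2 (SlidingScalar.ne_zero_of_pos hlam hη hle one_pos))
  have hbound : ∀ t ≥ (0 : ℝ), ‖vecPart (q t)‖ ≤ exp (k / 2) * exp (-(k / 2) * t) := by
    intro t ht
    rw [← pow_le_pow_iff_left₀ (norm_nonneg _) (by positivity) two_ne_zero, hvec t ht, mul_pow,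
      ← exp_nat_mul, ← exp_nat_mul, ← exp_add]
    refine (SlidingScalar.one_sub_sq_le_exp hlam.le hη hle t).trans_eq (congrArg exp ?_)
    push_cast
    ring
  refine ⟨⟨exp (k / 2), (exp_pos _).le, k / 2, half_pos hk, hbound⟩, ?_⟩
  have him : Tendsto (fun t => (q t).im) atTop (𝓝 0) := by
    have h := (SlidingScalar.tendsto_one_sub_sq_atTop hlam hη hle).sqrt
    rw [sqrt_zero] at h
    refine tendsto_zero_iff_norm_tendsto_zero.2 <| h.congr' <| (eventually_ge_atTop 0).mono
      fun t ht => ?_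
    rw [← hvec t ht, sqrt_sq (norm_nonneg _), norm_vecPart]
  rcases SlidingScalar.tendsto_one_or_neg_one hlam hη hle with h | h
  · exact .inl <| by simpa using tendsto_coe_of_tendsto_re_of_tendsto_im h him
  · exact .inr <| by simpa using tendsto_coe_of_tendsto_re_of_tendsto_im h him
end
end

section
/- Let λ > 0 and let q : ℝ → Quaternion ℝ be differentiable with ‖q(t)‖ = 1 for all t and satisfy q'(t) = (1/2) · q(t) * ⟦−λ · sgn₊(q°(t)) · q⃗(t)⟧. If q°(t₀) = 0 at some time t₀, then the derivative of the real part at t₀ equals (λ/2) · ‖q⃗(t₀)‖² = λ/2 > 0. In particular, the set {q° = 0, ‖q⃗‖ = 1} is not invariant: the real part immediately becomes positive. -/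
noncomputable section

/-! At a time where `q° = 0` we have `sgn₊(q°) = 1` and the dynamics reads `q' = -(λ/2) q ⟦q⃗⟧`.
Since `(p * ⟦v⟧)° = -⟪p⃗, v⟫`, the real part of `q'` is `(λ/2) ‖q⃗‖²`, and `‖q⃗‖ = ‖q‖ = 1` there. -/

theorem HasDerivAt.quaternion_re_s3 {q : ℝ → Quaternion ℝ} {q' : Quaternion ℝ} {t : ℝ}
    (hq : HasDerivAt q q' t) : HasDerivAt (fun s => (q s).re) q'.re t := by
  simpa [Quaternion.inner_def] using
    hq.inner ℝ (hasDerivAt_const t (1 : Quaternion ℝ))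

theorem norm_vecPart_sq_s3 (p : Quaternion ℝ) :
    ‖vecPart p‖ ^ 2 = p.imI ^ 2 + p.imJ ^ 2 + p.imK ^ 2 := by
  rw [EuclideanSpace.norm_sq_eq, Fin.sum_univ_three]
  simp [vecPart]

theorem norm_sq_eq_re_sq_add_norm_vecPart_sq (p : Quaternion ℝ) :
    ‖p‖ ^ 2 = p.re ^ 2 + ‖vecPart p‖ ^ 2 := by
  rw [sq, ← Quaternion.normSq_eq_norm_mul_self, Quaternion.normSq_def', norm_vecPart_sq_s3]
  ring

theorem re_mul_quatOfVec (p : Quaternion ℝ) (v : EuclideanSpace ℝ (Fin 3)) :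
    (p * quatOfVec v).re = -inner ℝ (vecPart p) v := by
  rw [Quaternion.re_mul]
  simp only [quatOfVec, vecPart, PiLp.inner_apply, RCLike.inner_apply, Real.ringHom_apply,
    Fin.sum_univ_three, Matrix.cons_val_zero, Matrix.cons_val_one, Matrix.cons_val]
  ring

theorem re_smul_mul_quatOfVec_smul_vecPart (a c : ℝ) (p : Quaternion ℝ) :
    (a • (p * quatOfVec (c • vecPart p))).re = -(a * c) * ‖vecPart p‖ ^ 2 := by
  rw [Quaternion.re_smul, re_mul_quatOfVec, inner_smul_right, real_inner_self_eq_norm_sq,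
    smul_eq_mul]
  ring

theorem sgnPlus_zero : sgnPlus 0 = 1 := if_pos le_rfl

theorem real_part_strictly_increases_at_zero
    (lam : ℝ) (hlam : 0 < lam) (q : ℝ → Quaternion ℝ)
    (hq : Differentiable ℝ q)
    (hunit : ∀ t : ℝ, ‖q t‖ = 1)
    (hdyn : ∀ t : ℝ, deriv q t =
      (1 / 2 : ℝ) • (q t * quatOfVec ((-(lam * sgnPlus (q t).re)) • vecPart (q t))))
    (t₀ : ℝ) (hre : (q t₀).re = 0) :
    HasDerivAt (fun t => (q t).re) (lam / 2 * ‖vecPart (q t₀)‖ ^ 2) t₀ ∧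
      lam / 2 * ‖vecPart (q t₀)‖ ^ 2 = lam / 2 ∧ 0 < lam / 2 := by
  have hvec : ‖vecPart (q t₀)‖ ^ 2 = 1 := by
    simpa [hunit, hre] using (norm_sq_eq_re_sq_add_norm_vecPart_sq (q t₀)).symm
  have hderiv : (deriv q t₀).re = lam / 2 * ‖vecPart (q t₀)‖ ^ 2 := by
    rw [hdyn, re_smul_mul_quatOfVec_smul_vecPart, hre, sgnPlus_zero]
    ring
  refine ⟨hderiv ▸ (hq t₀).hasDerivAt.quaternion_re_s3, ?_, by positivity⟩
  rw [hvec, mul_one]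
end
end

section
/- Let q : ℝ → Quaternion ℝ be differentiable and satisfy the attitude kinematics q'(t) = (1/2) · q(t) * ⟦ω(t)⟧ for a continuous signal ω : ℝ → ℝ³. Then t ↦ ‖q⃗(t)‖² is differentiable with derivative q°(t) · ⟨q⃗(t), ω(t)⟩. (The cross-product term q⃗ × ω in the vector-part kinematics is orthogonal to q⃗ and contributes nothing.) -/
noncomputable section

open scoped RealInnerProductSpace

/-!
Differentiating `‖q⃗‖²` gives `2 ⟪q⃗, (q')⃗⟫ = ⟪q⃗, (q * ⟦ω⟧)⃗⟫`. The vector part of `q * ⟦ω⟧` is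
`q° ω + q⃗ × ω`, and the cross product is orthogonal to `q⃗`, leaving `q° ⟪q⃗, ω⟫`.
-/

def vecPartCLM : Quaternion ℝ →L[ℝ] EuclideanSpace ℝ (Fin 3) :=
  LinearMap.toContinuousLinearMap
    { toFun := vecPart
      map_add' := fun p q => by ext i; fin_cases i <;> rfl
      map_smul' := fun c p => by ext i; fin_cases i <;> rfl }

theorem vecPart_smul (c : ℝ) (p : Quaternion ℝ) : vecPart (c • p) = c • vecPart p :=
  vecPartCLM.map_smul c p

theorem inner_vecPart_mul_quatOfVec (p : Quaternion ℝ) (w : EuclideanSpace ℝ (Fin 3)) :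
    ⟪vecPart p, vecPart (p * quatOfVec w)⟫ = p.re * ⟪vecPart p, w⟫ := by
  simp only [vecPart, PiLp.inner_apply, Fin.sum_univ_three, RCLike.inner_apply, conj_trivial,
    Matrix.cons_val_zero, Matrix.cons_val_one, Matrix.cons_val_two, Matrix.head_cons,
    Matrix.tail_cons, Quaternion.imI_mul, Quaternion.imJ_mul, Quaternion.imK_mul]
  simp only [quatOfVec]
  ring

theorem HasDerivAt.norm_vecPart_sq {q : ℝ → Quaternion ℝ} {q' : Quaternion ℝ} {t : ℝ}
    (hq : HasDerivAt q q' t) :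
    HasDerivAt (fun τ => ‖vecPart (q τ)‖ ^ 2) (2 * ⟪vecPart (q t), vecPart q'⟫) t :=
  (vecPartCLM.hasFDerivAt.comp_hasDerivAt t hq).norm_sq

theorem lyapunov_derivative_identity_general
    (q : ℝ → Quaternion ℝ) (ω : ℝ → EuclideanSpace ℝ (Fin 3))
    (hq : Differentiable ℝ q)
    (hdyn : ∀ t : ℝ, deriv q t = (1 / 2 : ℝ) • (q t * quatOfVec (ω t))) :
    ∀ t : ℝ, HasDerivAt (fun τ => ‖vecPart (q τ)‖ ^ 2)
      ((q t).re * ⟪vecPart (q t), ω t⟫) t := by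
  intro t
  have h := (hq t).hasDerivAt.norm_vecPart_sq
  rw [hdyn t, vecPart_smul, inner_smul_right, inner_vecPart_mul_quatOfVec] at h
  convert h using 1
  ring

theorem lyapunov_derivative_identity
    (q : ℝ → Quaternion ℝ) (ω : ℝ → EuclideanSpace ℝ (Fin 3))
    (hq : Differentiable ℝ q) (hω : Continuous ω)
    (hdyn : ∀ t : ℝ, deriv q t = (1 / 2 : ℝ) • (q t * quatOfVec (ω t))) :
    ∀ t : ℝ, HasDerivAt (fun τ => ‖vecPart (q τ)‖ ^ 2)
      ((q t).re * ⟪vecPart (q t), ω t⟫) t :=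
  lyapunov_derivative_identity_general q ω hq hdyn
end
end
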